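/- Let n ≥ 4. The reduced order super commuting graph Δ^o(A_n)^*, i.e., the subgraph of Δ^o(A_n) induced on the non-identity even permutations, is connected if and only if none of n, n−1, n−2 is a prime number. Moreover, if none of n, n−1, n−2 is prime, then the diameter of Δ^o(A_n)^* is at most 3; that is, for all non-identity x, y ∈ A_n the distance between x and y in Δ^o(A_n)^* is at most 3. -/
import Mathlib


/-- The power graph of a group `G`: distinct `x, y` are adjacent iff one is a power
of the other, i.e. `x ∈ ⟨y⟩` or `y ∈ ⟨x⟩`. -/
def powerGraph (G : Type*) [Group G] : SimpleGraph G :=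
  SimpleGraph.fromRel (fun x y => x ∈ Subgroup.zpowers y)

/-- The enhanced power graph of a group `G`: distinct `x, y` are adjacent iff they lie
in a common cyclic subgroup. -/
def enhancedPowerGraph (G : Type*) [Group G] : SimpleGraph G :=
  SimpleGraph.fromRel
    (fun x y => ∃ z : G, x ∈ Subgroup.zpowers z ∧ y ∈ Subgroup.zpowers z)

/-- The commuting graph of a group `G`: distinct `x, y` are adjacent iff they commute. -/
def commutingGraph (G : Type*) [Group G] : SimpleGraph G :=
  SimpleGraph.fromRel (fun x y => x * y = y * x)

/-- The order super graph of a graph `A` on a group `G`: distinct `x, y` are adjacent iff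
they have the same order, or some elements of the same orders are adjacent in `A`. -/
def orderSuper (G : Type*) [Group G] (A : SimpleGraph G) : SimpleGraph G :=
  SimpleGraph.fromRel (fun x y =>
    orderOf x = orderOf y ∨
      ∃ x' y' : G, orderOf x' = orderOf x ∧ orderOf y' = orderOf y ∧ A.Adj x' y')

/-- The conjugacy super graph of a graph `A` on a group `G`: distinct `x, y` are adjacent
iff they are conjugate, or some conjugates of them are adjacent in `A`. -/
def conjSuper (G : Type*) [Group G] (A : SimpleGraph G) : SimpleGraph G :=
  SimpleGraph.fromRel (fun x y =>
    IsConj x y ∨ ∃ x' y' : G, IsConj x x' ∧ IsConj y y' ∧ A.Adj x' y')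

/-- A vertex of a simple graph is dominant if it is adjacent to every other vertex. -/
def IsDominantVertex {V : Type*} (Γ : SimpleGraph V) (v : V) : Prop :=
  ∀ w, w ≠ v → Γ.Adj v w


/-! ### Auxiliary lemmas -/

open Equiv Equiv.Perm

section AuxNumber

lemma aux_pp_dvd_lcm_mem {s : Multiset ℕ} (hs : ∀ l ∈ s, l ≠ 0) {p j : ℕ} (hp : p.Prime)
    (hj : j ≠ 0) (h : p ^ j ∣ s.lcm) : ∃ l ∈ s, p ^ j ∣ l := by
  induction s using Multiset.induction with
  | empty =>
    simp only [Multiset.lcm_zero] at h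
    exact absurd (Nat.le_of_dvd one_pos h) (by have := Nat.one_lt_pow hj hp.one_lt; omega)
  | cons a t ih =>
    have ha : a ≠ 0 := hs a (Multiset.mem_cons_self a t)
    have ht : ∀ l ∈ t, l ≠ 0 := fun l hl => hs l (Multiset.mem_cons_of_mem hl)
    have htl : t.lcm ≠ 0 := by
      intro h0; exact ht 0 ((Multiset.lcm_eq_zero_iff t).mp h0) rfl
    rw [Multiset.lcm_cons] at h
    have hlcm : Nat.lcm a t.lcm ≠ 0 := Nat.lcm_ne_zero ha htl
    have hdvd : p ^ j ∣ a ∨ p ^ j ∣ t.lcm := by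
      rw [lcm_eq_nat_lcm] at h
      rw [Nat.Prime.pow_dvd_iff_le_factorization hp hlcm, Nat.factorization_lcm ha htl,
        Finsupp.sup_apply, le_sup_iff] at h
      rcases h with h | h
      · exact Or.inl ((Nat.Prime.pow_dvd_iff_le_factorization hp ha).mpr h)
      · exact Or.inr ((Nat.Prime.pow_dvd_iff_le_factorization hp htl).mpr h)
    rcases hdvd with h1 | h2
    · exact ⟨a, Multiset.mem_cons_self a t, h1⟩
    · obtain ⟨l, hl, hdl⟩ := ih ht h2
      exact ⟨l, Multiset.mem_cons_of_mem hl, hdl⟩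

lemma aux_exists_cycle_len {n : ℕ} (σ : Perm (Fin n)) {p j : ℕ} (hp : p.Prime) (hj : j ≠ 0)
    (h : p ^ j ∣ orderOf σ) : ∃ l ∈ σ.cycleType, p ^ j ∣ l := by
  rw [← lcm_cycleType] at h
  exact aux_pp_dvd_lcm_mem (fun l hl => by have := two_le_of_mem_cycleType hl; omega) hp hj h

lemma aux_mem_ct_le {n : ℕ} (σ : Perm (Fin n)) {l : ℕ} (hl : l ∈ σ.cycleType) : l ≤ n := by
  calc l ≤ σ.cycleType.sum := Multiset.le_sum_of_mem hl
  _ = σ.support.card := sum_cycleType σ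
  _ ≤ n := by simpa using Finset.card_le_univ σ.support

lemma aux_sum_ct_le {n : ℕ} (σ : Perm (Fin n)) : σ.cycleType.sum ≤ n := by
  rw [sum_cycleType σ]; simpa using Finset.card_le_univ σ.support

lemma aux_LA {n : ℕ} (σ : Perm (Fin n)) {p j : ℕ} (hp : p.Prime) (hj : j ≠ 0)
    (h : p ^ j ∣ orderOf σ) : p ^ j ≤ n := by
  obtain ⟨l, hl, hdl⟩ := aux_exists_cycle_len σ hp hj h
  have h2 := two_le_of_mem_cycleType hl
  exact le_trans (Nat.le_of_dvd (by omega) hdl) (aux_mem_ct_le σ hl)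

lemma aux_LB {n : ℕ} (σ : Perm (Fin n)) {p q : ℕ} (hp : p.Prime) (hq : q.Prime) (hne : p ≠ q)
    (h : p * q ∣ orderOf σ) : p + q ≤ n := by
  have hcop : Nat.Coprime p q := (Nat.coprime_primes hp hq).mpr hne
  obtain ⟨l1, hl1, hd1⟩ := aux_exists_cycle_len σ hp one_ne_zero
    (by simpa using (dvd_of_mul_right_dvd h))
  obtain ⟨l2, hl2, hd2⟩ := aux_exists_cycle_len σ hq one_ne_zero
    (by simpa using (dvd_of_mul_left_dvd h))
  simp only [pow_one] at hd1 hd2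
  by_cases hql1 : q ∣ l1
  · have hmul : p * q ∣ l1 := hcop.mul_dvd_of_dvd_of_dvd hd1 hql1
    have h2 := two_le_of_mem_cycleType hl1
    have := Nat.le_of_dvd (by omega) hmul
    have := aux_mem_ct_le σ hl1
    have := Nat.add_le_mul hp.two_le hq.two_le
    omega
  · have hne12 : l2 ≠ l1 := fun h => hql1 (h ▸ hd2)
    have hl2' : l2 ∈ σ.cycleType.erase l1 := (Multiset.mem_erase_of_ne hne12).mpr hl2
    have : l1 + l2 ≤ σ.cycleType.sum := by
      rw [← Multiset.cons_erase hl1, Multiset.sum_cons]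
      exact Nat.add_le_add le_rfl (Multiset.le_sum_of_mem hl2')
    have h1 := Nat.le_of_dvd (by have := two_le_of_mem_cycleType hl1; omega) hd1
    have h2 := Nat.le_of_dvd (by have := two_le_of_mem_cycleType hl2; omega) hd2
    have hsum := aux_sum_ct_le σ
    omega

lemma aux_erase_zero_of {s : Multiset ℕ} (h2 : ∀ a ∈ s, 2 ≤ a) (h : s.sum = 0) : s = 0 := by
  by_contra h0
  obtain ⟨a, ha⟩ := Multiset.exists_mem_of_ne_zero h0
  have := h2 a ha
  have := Multiset.le_sum_of_mem ha
  omega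

/-- no even permutation has order `2 * p` when `p + 2 = n` and `p` is prime. -/
lemma aux_LC {n : ℕ} (σ : Perm (Fin n)) (hσ : σ ∈ alternatingGroup (Fin n)) {p : ℕ}
    (hp : p.Prime) (hpn : p + 2 = n) : orderOf σ ≠ 2 * p := by
  intro ho
  rw [Equiv.Perm.mem_alternatingGroup] at hσ
  rcases hp.eq_two_or_odd' with rfl | hodd
  · obtain ⟨l, hl, hdl⟩ := aux_exists_cycle_len σ (p := 2) (j := 2) Nat.prime_two two_ne_zero
      (by rw [ho]; norm_num)
    have hl4 : l = 4 := by
      have := aux_mem_ct_le σ hl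
      have := two_le_of_mem_cycleType hl
      obtain ⟨c, hc⟩ := hdl
      omega
    subst hl4
    have hsum := aux_sum_ct_le σ
    rw [← Multiset.cons_erase hl, Multiset.sum_cons] at hsum
    have he : σ.cycleType.erase 4 = 0 :=
      aux_erase_zero_of (fun a ha => two_le_of_mem_cycleType (Multiset.mem_of_mem_erase ha))
        (by omega)
    have hct : σ.cycleType = {4} := by rw [← Multiset.cons_erase hl, he]; rfl
    rw [sign_of_cycleType, hct] at hσ
    simp only [Multiset.sum_singleton, Multiset.card_singleton] at hσ
    exact absurd hσ (by decide)
  · have hop : p % 2 = 1 := Nat.odd_iff.mp hodd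
    have hp2 : 2 < p := by have := hp.two_le; omega
    obtain ⟨l1, hl1, hd1⟩ := aux_exists_cycle_len σ hp one_ne_zero
      (by rw [pow_one, ho]; exact dvd_mul_left p 2)
    rw [pow_one] at hd1
    obtain ⟨l2, hl2, hd2⟩ := aux_exists_cycle_len σ Nat.prime_two one_ne_zero
      (by rw [pow_one, ho]; exact dvd_mul_right 2 p)
    rw [pow_one] at hd2
    have hl1p : l1 = p := by
      have hle := aux_mem_ct_le σ hl1
      obtain ⟨c, hc⟩ := hd1
      have h2 := two_le_of_mem_cycleType hl1
      rcases c with _ | _ | c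
      · omega
      · omega
      · nlinarith
    rw [hl1p] at hl1
    have hne : l2 ≠ p := by
      rintro rfl; obtain ⟨c, hc⟩ := hd2; omega
    have hl2' : l2 ∈ σ.cycleType.erase p := (Multiset.mem_erase_of_ne hne).mpr hl2
    have hsum := aux_sum_ct_le σ
    rw [← Multiset.cons_erase hl1, Multiset.sum_cons] at hsum
    have hsum2 : (σ.cycleType.erase p).sum ≤ 2 := by omega
    have hl22 : l2 = 2 := by
      have := Multiset.le_sum_of_mem hl2'
      have := two_le_of_mem_cycleType hl2
      omega
    subst hl22
    rw [← Multiset.cons_erase hl2', Multiset.sum_cons] at hsum2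
    have he : (σ.cycleType.erase p).erase 2 = 0 :=
      aux_erase_zero_of (fun a ha => two_le_of_mem_cycleType
        (Multiset.mem_of_mem_erase (Multiset.mem_of_mem_erase ha))) (by omega)
    have hct : σ.cycleType = p ::ₘ 2 ::ₘ 0 := by
      rw [← Multiset.cons_erase hl1, ← Multiset.cons_erase hl2', he]
    rw [sign_of_cycleType, hct] at hσ
    have hodd2 : Odd ((p ::ₘ 2 ::ₘ (0 : Multiset ℕ)).sum
        + Multiset.card (p ::ₘ 2 ::ₘ (0 : Multiset ℕ))) := by
      simp only [Multiset.sum_cons, Multiset.card_cons, Multiset.sum_zero, Multiset.card_zero]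
      rw [Nat.odd_iff]; omega
    rw [Odd.neg_one_pow hodd2] at hσ
    exact absurd hσ (by decide)

lemma aux_orderOf_pow_div {G : Type*} [Group G] [Finite G] (x : G) {m : ℕ} (hm : m ∣ orderOf x)
    (hm1 : m ≠ 0) : orderOf (x ^ (orderOf x / m)) = m := by
  have hk : orderOf x ≠ 0 := (orderOf_pos x).ne'
  have h1 : orderOf x / m ≠ 0 :=
    (Nat.div_pos (Nat.le_of_dvd (Nat.pos_of_ne_zero hk) hm) (Nat.pos_of_ne_zero hm1)).ne'
  rw [orderOf_pow' x h1, Nat.gcd_eq_right (Nat.div_dvd_of_dvd hm), Nat.div_div_self hm hk]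

/-- existence of an element of the alternating group with given cycle type -/
lemma aux_exists_even_ct {n : ℕ} (m : Multiset ℕ) (hsum : m.sum ≤ n) (h2 : ∀ a ∈ m, 2 ≤ a)
    (hpar : Even (m.sum + Multiset.card m)) :
    ∃ x : alternatingGroup (Fin n), orderOf x = m.lcm ∧ (x : Perm (Fin n)).cycleType = m := by
  obtain ⟨σ, hσ⟩ := (Equiv.Perm.exists_with_cycleType_iff (Fin n) (m := m)).mpr
    ⟨by simpa using hsum, h2⟩
  have hmem : σ ∈ alternatingGroup (Fin n) := by
    rw [Equiv.Perm.mem_alternatingGroup, sign_of_cycleType, hσ, Even.neg_one_pow hpar]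
  refine ⟨⟨σ, hmem⟩, ?_, hσ⟩
  rw [Subgroup.orderOf_mk, ← lcm_cycleType, hσ]

end AuxNumber

section AuxKey

/-- in `A_n`, an element commuting with an element of prime order `p ≥ n - 2`
has order `1` or `p`. -/
lemma aux_LKEY {n : ℕ} (hn : 4 ≤ n) {p : ℕ} (hp : p.Prime) (hp1 : n - 2 ≤ p) (hp2 : p ≤ n)
    (u v : alternatingGroup (Fin n)) (hu : orderOf u = p) (huv : Commute u v) :
    orderOf v = 1 ∨ orderOf v = p := by
  by_contra hcon
  push_neg at hcon
  obtain ⟨h1, hpv⟩ := hcon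
  set k := orderOf v with hk
  have hk0 : k ≠ 0 := (orderOf_pos v).ne'
  by_cases hq : ∃ q, q.Prime ∧ q ∣ k ∧ q ≠ p
  · obtain ⟨q, hq, hqk, hqp⟩ := hq
    set w := v ^ (k / q) with hw
    have how : orderOf w = q := aux_orderOf_pow_div v hqk hq.ne_zero
    have hcuw : Commute u w := huv.pow_right _
    have hcop : (Nat.Coprime (orderOf u) (orderOf w)) := by
      rw [hu, how]; exact (Nat.coprime_primes hp hq).mpr (Ne.symm hqp)
    have hord : orderOf (u * w) = p * q := by
      rw [Commute.orderOf_mul_eq_mul_orderOf_of_coprime hcuw hcop, hu, how]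
    have hordc : orderOf ((u * w : alternatingGroup (Fin n)) : Perm (Fin n)) = p * q := by
      rw [Subgroup.orderOf_coe]; exact hord
    have hpq : p + q ≤ n := aux_LB _ hp hq (Ne.symm hqp) (by rw [hordc])
    have hq2 : q = 2 := by have := hq.two_le; omega
    have hpn : p + 2 = n := by have := hq.two_le; omega
    exact aux_LC _ (u * w).2 hp hpn (by rw [hordc, hq2, mul_comm])
  · push_neg at hq
    have hkp : k = p ^ k.primeFactorsList.length :=
      Nat.eq_prime_pow_of_unique_prime_dvd hk0 (fun {d} hd hdk => hq d hd hdk)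
    set a := k.primeFactorsList.length with ha
    have ha2 : 2 ≤ a := by
      rcases a with _ | _ | a
      · simp at hkp; omega
      · rw [hkp] at hpv; simp at hpv
      · omega
    have hdvd : p ^ 2 ∣ k := by
      rw [hkp]; exact pow_dvd_pow p ha2
    set w := v ^ (k / p ^ 2) with hw
    have how : orderOf w = p ^ 2 := aux_orderOf_pow_div v hdvd (pow_ne_zero 2 hp.pos.ne')
    have howc : orderOf ((w : alternatingGroup (Fin n)) : Perm (Fin n)) = p ^ 2 := by
      rw [Subgroup.orderOf_coe]; exact how
    have hle : p ^ 2 ≤ n := aux_LA _ hp two_ne_zero (by rw [howc])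
    have hp2le := hp.two_le
    rcases Nat.lt_or_ge p 3 with h3 | h3
    · have hp2' : p = 2 := by omega
      exact aux_LC _ w.2 hp (by omega) (by rw [howc, hp2']; norm_num)
    · rw [pow_two] at hle
      have hn2 : n ≤ p + 2 := by omega
      nlinarith

lemma aux_commute_of_adj {G : Type*} [Group G] {x y : G} (h : (commutingGraph G).Adj x y) :
    x ≠ y ∧ Commute x y := by
  rw [commutingGraph, SimpleGraph.fromRel_adj] at h
  exact ⟨h.1, h.2.elim (fun h => h) (fun h => h.symm)⟩

lemma aux_adj_order_p {n : ℕ} (hn : 4 ≤ n) {p : ℕ} (hp : p.Prime) (hp1 : n - 2 ≤ p)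
    (hp2 : p ≤ n) {a b : alternatingGroup (Fin n)} (hb : b ≠ 1) (ha : orderOf a = p)
    (h : (orderSuper (alternatingGroup (Fin n))
      (commutingGraph (alternatingGroup (Fin n)))).Adj a b) :
    orderOf b = p := by
  have hbord : orderOf b ≠ 1 := by simpa [orderOf_eq_one_iff] using hb
  rw [orderSuper, SimpleGraph.fromRel_adj] at h
  obtain ⟨hne, h | h⟩ := h
  · rcases h with h | ⟨x', y', hx', hy', hadj⟩
    · omega
    · obtain ⟨-, hc⟩ := aux_commute_of_adj hadj
      have := aux_LKEY hn hp hp1 hp2 x' y' (hx'.trans ha) hc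
      omega
  · rcases h with h | ⟨x', y', hx', hy', hadj⟩
    · omega
    · obtain ⟨-, hc⟩ := aux_commute_of_adj hadj
      have := aux_LKEY hn hp hp1 hp2 y' x' (hy'.trans ha) hc.symm
      omega

lemma aux_not_conn {n : ℕ} (hn : 4 ≤ n) {p : ℕ} (hp : p.Prime) (hp1 : n - 2 ≤ p)
    (hp2 : p ≤ n) :
    ¬ (SimpleGraph.induce {σ : alternatingGroup (Fin n) | σ ≠ 1}
        (orderSuper (alternatingGroup (Fin n))
          (commutingGraph (alternatingGroup (Fin n))))).Connected := by
  intro hcon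
  have hporder : ∃ u : alternatingGroup (Fin n), orderOf u = p := by
    rcases eq_or_ne p 2 with rfl | hp2'
    · obtain ⟨u, hu, -⟩ := aux_exists_even_ct (n := n) {2, 2} (by simpa using hn) (by decide)
        (by decide)
      exact ⟨u, by rw [hu]; decide⟩
    · have hodd : Odd p := hp.odd_of_ne_two hp2'
      obtain ⟨u, hu, -⟩ := aux_exists_even_ct (n := n) {p} (by simpa using hp2)
        (by intro a ha; rw [Multiset.mem_singleton] at ha; subst ha; exact hp.two_le)
        (by simpa using hodd.add_one)
      exact ⟨u, by rw [hu]; simp [Multiset.lcm_singleton]⟩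
  obtain ⟨u, hu⟩ := hporder
  set m : ℕ := if p = 3 then 2 else 3 with hm
  have hmorder : ∃ w : alternatingGroup (Fin n), orderOf w = m := by
    rcases eq_or_ne p 3 with rfl | hp3
    · obtain ⟨w, hw, -⟩ := aux_exists_even_ct (n := n) {2, 2} (by simpa using hn) (by decide)
        (by decide)
      exact ⟨w, by rw [hw]; simp only [hm, if_pos rfl]; decide⟩
    · obtain ⟨w, hw, -⟩ := aux_exists_even_ct (n := n) {3} (by simp; omega) (by decide)
        (by decide)
      exact ⟨w, by rw [hw, hm, if_neg hp3]; simp [Multiset.lcm_singleton]⟩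
  obtain ⟨w, hw⟩ := hmorder
  have hmp : m ≠ p := by
    rcases eq_or_ne p 3 with rfl | hp3
    · simp [hm]
    · simp only [hm, if_neg hp3]; omega
  have hm2 : 2 ≤ m := by rcases eq_or_ne p 3 with rfl | hp3 <;> simp [hm, *]
  have hu1 : u ∈ {σ : alternatingGroup (Fin n) | σ ≠ 1} := by
    simp only [Set.mem_setOf_eq]
    intro h; rw [h, orderOf_one] at hu; have := hp.two_le; omega
  have hw1 : w ∈ {σ : alternatingGroup (Fin n) | σ ≠ 1} := by
    simp only [Set.mem_setOf_eq]
    intro h; rw [h, orderOf_one] at hw; omega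
  obtain ⟨walk⟩ := hcon.preconnected ⟨u, hu1⟩ ⟨w, hw1⟩
  have key : ∀ (a b : {σ : alternatingGroup (Fin n) | σ ≠ 1})
      (wk : (SimpleGraph.induce {σ : alternatingGroup (Fin n) | σ ≠ 1}
        (orderSuper (alternatingGroup (Fin n))
          (commutingGraph (alternatingGroup (Fin n))))).Walk a b),
      orderOf a.1 = p → orderOf b.1 = p := by
    intro a b wk
    induction wk with
    | nil => exact id
    | @cons c d e h q ih =>
      intro hc
      refine ih (aux_adj_order_p hn hp hp1 hp2 d.2 hc ?_)
      simpa using h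
  have := key _ _ walk hu
  rw [hw] at this
  omega

end AuxKey

section AuxForward

/-- the predicate for "good intermediate orders" -/
def GoodOrd (n m : ℕ) : Prop := m = 2 ∨ (m.Prime ∧ Odd m ∧ 2 * m ≤ n)

lemma GoodOrd.two_le {n m : ℕ} (h : GoodOrd n m) : 2 ≤ m := by
  rcases h with rfl | ⟨hp, -, -⟩
  · exact le_refl 2
  · exact hp.two_le

lemma aux_ne_one_of_orderOf {G : Type*} [Group G] {a : G} {m : ℕ} (h : orderOf a = m)
    (hm : 2 ≤ m) : a ≠ 1 := by rintro rfl; rw [orderOf_one] at h; omega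

/-- two distinct elements of any good order -/
lemma aux_EXIST2 {n : ℕ} (hn : 10 ≤ n) {m : ℕ} (hQ : GoodOrd n m) :
    ∃ z1 z2 : alternatingGroup (Fin n), orderOf z1 = m ∧ orderOf z2 = m ∧ z1 ≠ z2 := by
  rcases hQ with rfl | ⟨hp, hodd, hle⟩
  · obtain ⟨z1, hz1, hc1⟩ := aux_exists_even_ct (n := n) {2, 2} (by simp; omega) (by decide)
      (by decide)
    obtain ⟨z2, hz2, hc2⟩ := aux_exists_even_ct (n := n) {2, 2, 2, 2} (by simp; omega)
      (by decide) (by decide)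
    refine ⟨z1, z2, by rw [hz1]; decide, by rw [hz2]; decide, ?_⟩
    intro h
    rw [h, hc2] at hc1
    exact absurd hc1 (by decide)
  · have hm2 := hp.two_le
    obtain ⟨z1, hz1, hc1⟩ := aux_exists_even_ct (n := n) {m} (by simp; omega)
      (by intro a ha; rw [Multiset.mem_singleton] at ha; omega) (by simpa using hodd.add_one)
    obtain ⟨z2, hz2, hc2⟩ := aux_exists_even_ct (n := n) {m, m}
      (by simp only [Multiset.insert_eq_cons, Multiset.sum_cons, Multiset.sum_singleton]; omega)
      (by intro a ha; simp at ha; omega)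
      (by simp only [Multiset.insert_eq_cons, Multiset.sum_cons, Multiset.sum_singleton,
            Multiset.card_cons, Multiset.card_singleton]
          rw [Nat.even_iff]; rw [Nat.odd_iff] at hodd; omega)
    refine ⟨z1, z2, by rw [hz1]; simp [Multiset.lcm_singleton],
      by rw [hz2]; simp [Multiset.lcm_cons, Multiset.lcm_singleton], ?_⟩
    intro h
    rw [h, hc2] at hc1
    have := congrArg Multiset.card hc1
    simp at this

/-- commuting pair with distinct good orders -/
lemma aux_PAIR {n : ℕ} (hn : 10 ≤ n) {m1 m2 : ℕ} (hQ1 : GoodOrd n m1) (hQ2 : GoodOrd n m2)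
    (hne : m1 ≠ m2) :
    ∃ u v : alternatingGroup (Fin n), orderOf u = m1 ∧ orderOf v = m2 ∧ Commute u v := by
  have main : ∀ m1 m2 : ℕ, GoodOrd n m1 → GoodOrd n m2 → m1 ≠ m2 → m1 = 2 →
      ∃ u v : alternatingGroup (Fin n), orderOf u = m1 ∧ orderOf v = m2 ∧ Commute u v := by
    rintro m1 m2 hQ1 hQ2 hne rfl
    rcases hQ2 with rfl | ⟨hp, hodd, hle⟩
    · omega
    · have h3 : 3 ≤ m2 := by
        have := hp.two_le
        rcases Nat.lt_or_ge m2 3 with h | h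
        · interval_cases m2 <;> simp_all
        · exact h
      have hoddm : m2 % 2 = 1 := Nat.odd_iff.mp hodd
      obtain ⟨z, hz, -⟩ := aux_exists_even_ct (n := n) {2, 2, m2}
        (by simp only [Multiset.insert_eq_cons, Multiset.sum_cons, Multiset.sum_singleton]; omega)
        (by intro a ha; simp only [Multiset.insert_eq_cons, Multiset.mem_cons,
              Multiset.mem_singleton] at ha; rcases ha with rfl | rfl | rfl <;> omega)
        (by simp only [Multiset.insert_eq_cons, Multiset.sum_cons, Multiset.sum_singleton,
              Multiset.card_cons, Multiset.card_singleton]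
            rw [Nat.even_iff]; omega)
      have h2d : (2 : ℕ) ∣ orderOf z := by
        rw [hz]; exact Multiset.dvd_lcm (by simp)
      have hmd : m2 ∣ orderOf z := by
        rw [hz]; exact Multiset.dvd_lcm (by simp)
      exact ⟨z ^ (orderOf z / 2), z ^ (orderOf z / m2),
        aux_orderOf_pow_div z h2d two_ne_zero, aux_orderOf_pow_div z hmd (by omega),
        (Commute.refl z).pow_pow _ _⟩
  rcases hQ1 with h1 | ⟨hp1, hodd1, hle1⟩
  · exact main m1 m2 (Or.inl h1) hQ2 hne h1
  · rcases hQ2 with h2 | ⟨hp2, hodd2, hle2⟩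
    · obtain ⟨u, v, hu, hv, hc⟩ := main m2 m1 (Or.inl h2) (Or.inr ⟨hp1, hodd1, hle1⟩)
        (Ne.symm hne) h2
      exact ⟨v, u, hv, hu, hc.symm⟩
    · obtain ⟨z, hz, -⟩ := aux_exists_even_ct (n := n) {m1, m2}
        (by simp only [Multiset.insert_eq_cons, Multiset.sum_cons, Multiset.sum_singleton]; omega)
        (by intro a ha; simp only [Multiset.insert_eq_cons, Multiset.mem_cons,
              Multiset.mem_singleton] at ha
            have := hp1.two_le; have := hp2.two_le
            rcases ha with rfl | rfl <;> omega)
        (by simp only [Multiset.insert_eq_cons, Multiset.sum_cons, Multiset.sum_singleton,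
              Multiset.card_cons, Multiset.card_singleton]
            rw [Nat.even_iff]; rw [Nat.odd_iff] at hodd1 hodd2; omega)
      have h1d : m1 ∣ orderOf z := by rw [hz]; exact Multiset.dvd_lcm (by simp)
      have h2d : m2 ∣ orderOf z := by rw [hz]; exact Multiset.dvd_lcm (by simp)
      have := hp1.two_le; have := hp2.two_le
      exact ⟨z ^ (orderOf z / m1), z ^ (orderOf z / m2),
        aux_orderOf_pow_div z h1d (by omega), aux_orderOf_pow_div z h2d (by omega),
        (Commute.refl z).pow_pow _ _⟩

/-- each nontrivial element admits a commuting companion of good order -/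
lemma aux_KEY {n : ℕ} (hn : 10 ≤ n)
    (hnp : ¬ n.Prime ∧ ¬ (n - 1).Prime ∧ ¬ (n - 2).Prime)
    (x : alternatingGroup (Fin n)) (hx : x ≠ 1) :
    ∃ m, GoodOrd n m ∧ (orderOf x = m ∨ ∃ u v : alternatingGroup (Fin n),
      orderOf u = orderOf x ∧ orderOf v = m ∧ Commute u v ∧ u ≠ v) := by
  set k := orderOf x with hk
  have hk1 : k ≠ 1 := by simpa [hk, orderOf_eq_one_iff] using hx
  have hk0 : k ≠ 0 := (orderOf_pos x).ne'
  have pow_branch : ∀ m, m.Prime → m ∣ k → k ≠ m →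
      ∃ u v : alternatingGroup (Fin n),
        orderOf u = orderOf x ∧ orderOf v = m ∧ Commute u v ∧ u ≠ v := by
    intro m hm hmk hkm
    have hord : orderOf (x ^ (k / m)) = m := aux_orderOf_pow_div x hmk hm.ne_zero
    refine ⟨x, x ^ (k / m), rfl, hord, (Commute.refl x).pow_right _, ?_⟩
    intro he
    rw [← he] at hord
    exact hkm (hk.trans hord)
  by_cases h2 : 2 ∣ k
  · refine ⟨2, Or.inl rfl, ?_⟩
    rcases eq_or_ne k 2 with he | hne
    · exact Or.inl he
    · exact Or.inr (pow_branch 2 Nat.prime_two h2 hne)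
  · by_cases h3 : 3 ∣ k
    · refine ⟨3, Or.inr ⟨Nat.prime_three, by decide, by omega⟩, ?_⟩
      rcases eq_or_ne k 3 with he | hne
      · exact Or.inl he
      · exact Or.inr (pow_branch 3 Nat.prime_three h3 hne)
    · set p := k.minFac with hpdef
      have hp : p.Prime := Nat.minFac_prime hk1
      have hpk : p ∣ k := Nat.minFac_dvd k
      have hp2 : p ≠ 2 := fun h => h2 (h ▸ hpk)
      have hp3 : p ≠ 3 := fun h => h3 (h ▸ hpk)
      have hpodd : Odd p := hp.odd_of_ne_two hp2
      by_cases hple : 2 * p ≤ n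
      · refine ⟨p, Or.inr ⟨hp, hpodd, hple⟩, ?_⟩
        rcases eq_or_ne k p with he | hne
        · exact Or.inl he
        · exact Or.inr (pow_branch p hp hpk hne)
      · have hkp : k = p := by
          by_contra hkp
          by_cases hqq : ∃ q, q.Prime ∧ q ∣ k ∧ q ≠ p
          · obtain ⟨q, hq, hqk, hqp⟩ := hqq
            have hpq : p ≤ q := Nat.minFac_le_of_dvd hq.two_le hqk
            have hcop : Nat.Coprime p q := (Nat.coprime_primes hp hq).mpr (Ne.symm hqp)
            have hpqk : p * q ∣ k := hcop.mul_dvd_of_dvd_of_dvd hpk hqk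
            have hw : orderOf (x ^ (k / (p * q))) = p * q :=
              aux_orderOf_pow_div x hpqk
                (by have := hp.two_le; have := hq.two_le; positivity)
            have hwc : orderOf ((x ^ (k / (p * q)) : alternatingGroup (Fin n)) : Perm (Fin n))
                = p * q := by rw [Subgroup.orderOf_coe, hw]
            have := aux_LB _ hp hq (Ne.symm hqp) (by rw [hwc])
            omega
          · push_neg at hqq
            have hkpa : k = p ^ k.primeFactorsList.length :=
              Nat.eq_prime_pow_of_unique_prime_dvd hk0 (fun {d} hd hdk => hqq d hd hdk)
            set a := k.primeFactorsList.length with ha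
            have ha2 : 2 ≤ a := by
              rcases a with _ | _ | a
              · simp at hkpa; omega
              · rw [hkpa] at hkp; simp at hkp
              · omega
            have hdvd : p ^ 2 ∣ k := by rw [hkpa]; exact pow_dvd_pow p ha2
            have hw : orderOf (x ^ (k / p ^ 2)) = p ^ 2 :=
              aux_orderOf_pow_div x hdvd (pow_ne_zero 2 hp.pos.ne')
            have hwc : orderOf ((x ^ (k / p ^ 2) : alternatingGroup (Fin n)) : Perm (Fin n))
                = p ^ 2 := by rw [Subgroup.orderOf_coe, hw]
            have hle := aux_LA _ hp two_ne_zero (dvd_of_eq hwc.symm)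
            rw [pow_two] at hle
            have := hp.two_le
            nlinarith
        have hplen : p ≤ n := by
          have hxd : (p : ℕ) ∣ orderOf ((x : alternatingGroup (Fin n)) : Perm (Fin n)) := by
            rw [Subgroup.orderOf_coe, ← hk]; exact hpk
          have := aux_LA _ hp one_ne_zero (by rw [pow_one]; exact hxd)
          rwa [pow_one] at this
        have hpn : p ≠ n := fun h => hnp.1 (h ▸ hp)
        have hpn1 : p ≠ n - 1 := fun h => hnp.2.1 (h ▸ hp)
        have hpn2 : p ≠ n - 2 := fun h => hnp.2.2 (h ▸ hp)
        have hple3 : p + 3 ≤ n := by omega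
        obtain ⟨z, hz, -⟩ := aux_exists_even_ct (n := n) {p, 3}
          (by simp only [Multiset.insert_eq_cons, Multiset.sum_cons,
                Multiset.sum_singleton]; omega)
          (by intro a ha; simp only [Multiset.insert_eq_cons, Multiset.mem_cons,
                Multiset.mem_singleton] at ha
              have := hp.two_le; rcases ha with rfl | rfl <;> omega)
          (by simp only [Multiset.insert_eq_cons, Multiset.sum_cons, Multiset.sum_singleton,
                Multiset.card_cons, Multiset.card_singleton]
              rw [Nat.even_iff]; rw [Nat.odd_iff] at hpodd; omega)
        have hpd : p ∣ orderOf z := by rw [hz]; exact Multiset.dvd_lcm (by simp)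
        have h3d : (3 : ℕ) ∣ orderOf z := by rw [hz]; exact Multiset.dvd_lcm (by simp)
        refine ⟨3, Or.inr ⟨Nat.prime_three, by decide, by omega⟩, Or.inr
          ⟨z ^ (orderOf z / p), z ^ (orderOf z / 3), ?_,
            aux_orderOf_pow_div z h3d (by omega), (Commute.refl z).pow_pow _ _, ?_⟩⟩
        · rw [aux_orderOf_pow_div z hpd hp.pos.ne']; omega
        · intro he
          have e1 := aux_orderOf_pow_div z hpd hp.pos.ne'
          have e2 := aux_orderOf_pow_div z h3d (by omega)
          rw [he, e2] at e1
          exact hp3 e1.symm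

lemma aux_adj_of {n : ℕ} {x a : alternatingGroup (Fin n)} (hne : x ≠ a)
    (h : orderOf x = orderOf a ∨ ∃ u v : alternatingGroup (Fin n),
      orderOf u = orderOf x ∧ orderOf v = orderOf a ∧ Commute u v ∧ u ≠ v) :
    (orderSuper (alternatingGroup (Fin n))
      (commutingGraph (alternatingGroup (Fin n)))).Adj x a := by
  rw [orderSuper, SimpleGraph.fromRel_adj]
  refine ⟨hne, Or.inl ?_⟩
  rcases h with h | ⟨u, v, hu, hv, hc, huv⟩
  · exact Or.inl h
  · refine Or.inr ⟨u, v, hu, hv, ?_⟩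
    rw [commutingGraph, SimpleGraph.fromRel_adj]
    exact ⟨huv, Or.inl hc⟩

lemma aux_adj_ind {n : ℕ} {x a : alternatingGroup (Fin n)} (hx : x ≠ 1) (ha : a ≠ 1)
    (hne : x ≠ a)
    (h : orderOf x = orderOf a ∨ ∃ u v : alternatingGroup (Fin n),
      orderOf u = orderOf x ∧ orderOf v = orderOf a ∧ Commute u v ∧ u ≠ v) :
    (SimpleGraph.induce {σ : alternatingGroup (Fin n) | σ ≠ 1}
        (orderSuper (alternatingGroup (Fin n))
          (commutingGraph (alternatingGroup (Fin n))))).Adj ⟨x, hx⟩ ⟨a, ha⟩ := by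
  simpa using aux_adj_of hne h

lemma aux_reach3 {n : ℕ} (hn : 10 ≤ n)
    (hnp : ¬ n.Prime ∧ ¬ (n - 1).Prime ∧ ¬ (n - 2).Prime)
    (x y : alternatingGroup (Fin n)) (hx : x ≠ 1) (hy : y ≠ 1) (hxy : x ≠ y) :
    ∃ wk : (SimpleGraph.induce {σ : alternatingGroup (Fin n) | σ ≠ 1}
        (orderSuper (alternatingGroup (Fin n))
          (commutingGraph (alternatingGroup (Fin n))))).Walk ⟨x, hx⟩ ⟨y, hy⟩,
      wk.length ≤ 3 := by
  obtain ⟨m1, hQ1, hx'⟩ := aux_KEY hn hnp x hx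
  obtain ⟨m2, hQ2, hy'⟩ := aux_KEY hn hnp y hy
  have hm1 := hQ1.two_le
  have hm2 := hQ2.two_le
  have hxadj : ∀ a : alternatingGroup (Fin n), x ≠ a → orderOf a = m1 →
      orderOf x = orderOf a ∨ ∃ u v : alternatingGroup (Fin n),
        orderOf u = orderOf x ∧ orderOf v = orderOf a ∧ Commute u v ∧ u ≠ v := by
    intro a hne ha
    rcases hx' with h | ⟨u, v, hu, hv, hc, huv⟩
    · exact Or.inl (h.trans ha.symm)
    · exact Or.inr ⟨u, v, hu, hv.trans ha.symm, hc, huv⟩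
  have hyadj : ∀ b : alternatingGroup (Fin n), y ≠ b → orderOf b = m2 →
      orderOf y = orderOf b ∨ ∃ u v : alternatingGroup (Fin n),
        orderOf u = orderOf y ∧ orderOf v = orderOf b ∧ Commute u v ∧ u ≠ v := by
    intro b hne hb
    rcases hy' with h | ⟨u, v, hu, hv, hc, huv⟩
    · exact Or.inl (h.trans hb.symm)
    · exact Or.inr ⟨u, v, hu, hv.trans hb.symm, hc, huv⟩
  rcases eq_or_ne m1 m2 with rfl | hne12
  · obtain ⟨z1, z2, hz1, hz2, hz12⟩ := aux_EXIST2 hn hQ1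
    have hz1n : z1 ≠ 1 := aux_ne_one_of_orderOf hz1 hm1
    have hz2n : z2 ≠ 1 := aux_ne_one_of_orderOf hz2 hm1
    by_cases hc1 : x = z1 ∨ y = z2
    · have hxz2 : x ≠ z2 := by
        rcases hc1 with h | h
        · rw [h]; exact hz12
        · exact fun he => hxy (he.trans h.symm)
      have hz1y : y ≠ z1 := by
        rcases hc1 with h | h
        · exact fun he => hxy (h.trans he.symm)
        · exact fun he => hz12 (he.symm.trans h)
      refine ⟨SimpleGraph.Walk.cons (aux_adj_ind hx hz2n hxz2 (hxadj z2 hxz2 hz2))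
        (SimpleGraph.Walk.cons (aux_adj_ind hz2n hz1n (Ne.symm hz12)
          (Or.inl (hz2.trans hz1.symm)))
        (SimpleGraph.Walk.cons ((aux_adj_ind hy hz1n hz1y (hyadj z1 hz1y hz1)).symm)
          SimpleGraph.Walk.nil)), by simp⟩
    · push_neg at hc1
      obtain ⟨hxz1, hyz2⟩ := hc1
      refine ⟨SimpleGraph.Walk.cons (aux_adj_ind hx hz1n hxz1 (hxadj z1 hxz1 hz1))
        (SimpleGraph.Walk.cons (aux_adj_ind hz1n hz2n hz12
          (Or.inl (hz1.trans hz2.symm)))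
        (SimpleGraph.Walk.cons ((aux_adj_ind hy hz2n hyz2 (hyadj z2 hyz2 hz2)).symm)
          SimpleGraph.Walk.nil)), by simp⟩
  · obtain ⟨z1, z1', hz1, hz1', hz11'⟩ := aux_EXIST2 hn hQ1
    obtain ⟨z2, z2', hz2, hz2', hz22'⟩ := aux_EXIST2 hn hQ2
    obtain ⟨a, hao, hax⟩ : ∃ a : alternatingGroup (Fin n), orderOf a = m1 ∧ x ≠ a := by
      by_cases h : z1 = x
      · exact ⟨z1', hz1', fun he => hz11' (h.trans he)⟩
      · exact ⟨z1, hz1, fun he => h he.symm⟩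
    obtain ⟨b, hbo, hby⟩ : ∃ b : alternatingGroup (Fin n), orderOf b = m2 ∧ y ≠ b := by
      by_cases h : z2 = y
      · exact ⟨z2', hz2', fun he => hz22' (h.trans he)⟩
      · exact ⟨z2, hz2, fun he => h he.symm⟩
    have han : a ≠ 1 := aux_ne_one_of_orderOf hao hm1
    have hbn : b ≠ 1 := aux_ne_one_of_orderOf hbo hm2
    have hab : a ≠ b := fun he => hne12 (by rw [← hao, ← hbo, he])
    obtain ⟨u, v, hu, hv, hcm⟩ := aux_PAIR hn hQ1 hQ2 hne12
    have huv : u ≠ v := fun he => hne12 (by rw [← hu, ← hv, he])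
    refine ⟨SimpleGraph.Walk.cons (aux_adj_ind hx han hax (hxadj a hax hao))
      (SimpleGraph.Walk.cons (aux_adj_ind han hbn hab
        (Or.inr ⟨u, v, hu.trans hao.symm, hv.trans hbo.symm, hcm, huv⟩))
      (SimpleGraph.Walk.cons ((aux_adj_ind hy hbn hby (hyadj b hby hbo)).symm)
        SimpleGraph.Walk.nil)), by simp⟩

lemma aux_N10 {n : ℕ} (hn : 4 ≤ n)
    (h : ¬ n.Prime ∧ ¬ (n - 1).Prime ∧ ¬ (n - 2).Prime) : 10 ≤ n := by
  by_contra hlt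
  push_neg at hlt
  interval_cases n
  · exact h.2.1 (by norm_num)
  · exact h.1 (by norm_num)
  · exact h.2.1 (by norm_num)
  · exact h.1 (by norm_num)
  · exact h.2.1 (by norm_num)
  · exact h.2.2 (by norm_num)

end AuxForward

/-- For `n ≥ 4`, the reduced order super commuting graph of `A_n` is connected iff none
of `n`, `n - 1`, `n - 2` is prime; moreover, in that case its diameter is at most `3`. -/
theorem reduced_orderSuper_commutingGraph_alternatingGroup_connected_iff_and_diam
    (n : ℕ) (hn : 4 ≤ n) :
    ((SimpleGraph.induce {σ : alternatingGroup (Fin n) | σ ≠ 1}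
        (orderSuper (alternatingGroup (Fin n))
          (commutingGraph (alternatingGroup (Fin n))))).Connected
      ↔ ¬ n.Prime ∧ ¬ (n - 1).Prime ∧ ¬ (n - 2).Prime) ∧
    ((¬ n.Prime ∧ ¬ (n - 1).Prime ∧ ¬ (n - 2).Prime) →
      ∀ (x y : alternatingGroup (Fin n)) (hx : x ≠ 1) (hy : y ≠ 1),
        (SimpleGraph.induce {σ : alternatingGroup (Fin n) | σ ≠ 1}
          (orderSuper (alternatingGroup (Fin n))
            (commutingGraph (alternatingGroup (Fin n))))).dist ⟨x, hx⟩ ⟨y, hy⟩ ≤ 3) := by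
  constructor
  · constructor
    · intro hcon
      by_cases h1 : n.Prime
      · exact absurd hcon (aux_not_conn hn h1 (by omega) le_rfl)
      by_cases h2 : (n - 1).Prime
      · exact absurd hcon (aux_not_conn hn h2 (by omega) (by omega))
      by_cases h3 : (n - 2).Prime
      · exact absurd hcon (aux_not_conn hn h3 (by omega) (by omega))
      exact ⟨h1, h2, h3⟩
    · intro h
      have hn10 := aux_N10 hn h
      obtain ⟨z, hz, -⟩ := aux_exists_even_ct (n := n) {3} (by simp; omega) (by decide)
        (by decide)
      have hzo : orderOf z = 3 := by rw [hz]; simp [Multiset.lcm_singleton]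
      have hz1 : z ≠ 1 := aux_ne_one_of_orderOf hzo (by omega)
      rw [SimpleGraph.connected_iff]
      refine ⟨?_, ⟨⟨z, hz1⟩⟩⟩
      rintro ⟨a, ha⟩ ⟨b, hb⟩
      rcases eq_or_ne a b with rfl | hab
      · exact SimpleGraph.Reachable.refl _
      · obtain ⟨wk, -⟩ := aux_reach3 hn10 h a b ha hb hab
        exact ⟨wk⟩
  · intro h x y hx hy
    have hn10 := aux_N10 hn h
    rcases eq_or_ne x y with rfl | hxy
    · rw [show (⟨x, hx⟩ : {σ : alternatingGroup (Fin n) | σ ≠ 1}) = ⟨x, hy⟩ from rfl,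
        SimpleGraph.dist_self]
      omega
    · obtain ⟨wk, hlen⟩ := aux_reach3 hn10 h x y hx hy hxy
      exact le_trans (SimpleGraph.dist_le wk) hlen
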